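/- In the split graph G of the geodetic-set construction, if S is a minimal geodetic set of G such that S ∩ U = ∅, then S ∩ K is a subset of V and is a minimal transversal of 𝓗. -/
import Mathlib


namespace GeoConstr

/-! ## The geodetic-set construction

Given a hypergraph `ℋ` with vertex set `{v_1, …, v_n}` (encoded as `Fin n`) and edge set
`E_1, …, E_m` (encoded as `E : Fin m → Set (Fin n)`), with `n, m ≥ 1` and no vertex of `ℋ`
belonging to every edge, we build the split graph `G` of the reduction from Trans-Enum to
MinGeodetic on split graphs.  Vertex `v_i` of the paper is `GVert.v ⟨i-1⟩`, `e_j` is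
`GVert.e ⟨j-1⟩`, `u_j` is `GVert.u ⟨j-1⟩`, and `e*`, `u*` are `GVert.estar`, `GVert.ustar`. -/

inductive GVert (n m : ℕ) : Type
  | v : Fin n → GVert n m
  | e : Fin m → GVert n m
  | u : Fin m → GVert n m
  | estar : GVert n m
  | ustar : GVert n m

variable {n m : ℕ}

/-- The base (one-sided) adjacency relation of the construction; the graph is obtained by
symmetrizing it. -/
def baseRel (E : Fin m → Set (Fin n)) : GVert n m → GVert n m → Prop
  | .v _, .v _ => True            -- U ∪ V is a clique
  | .u _, .u _ => True
  | .v _, .u _ => True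
  | .v i, .e j => i ∉ E j         -- non-incidence between V and H
  | .u j, .e j' => j = j'         -- u_j is adjacent to e_j and to no other vertex of H
  | .estar, .v _ => True          -- e* is adjacent to every vertex of V
  | .ustar, .ustar => False
  | .ustar, _ => True             -- u* is adjacent to every other vertex of G
  | _, _ => False

/-- The split graph `G` of the geodetic-set construction. -/
def G (E : Fin m → Set (Fin n)) : SimpleGraph (GVert n m) :=
  SimpleGraph.fromRel (baseRel E)

/-- `z` lies on some shortest `x`–`y` path in `G`. -/
def LiesOnShortestPath {α : Type*} (G : SimpleGraph α) (x y z : α) : Prop :=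
  ∃ pth : G.Walk x y, pth.IsPath ∧ pth.length = G.dist x y ∧ z ∈ pth.support

/-- `S` is a geodetic set of `G`: every vertex is covered by some pair of vertices of `S`. -/
def IsGeodeticSet {α : Type*} (G : SimpleGraph α) (S : Set α) : Prop :=
  ∀ z : α, ∃ x ∈ S, ∃ y ∈ S, LiesOnShortestPath G x y z

/-- `S` is an inclusion-wise minimal geodetic set of `G`. -/
def IsMinimalGeodeticSet {α : Type*} (G : SimpleGraph α) (S : Set α) : Prop :=
  IsGeodeticSet G S ∧ ∀ S' : Set α, S' ⊂ S → ¬ IsGeodeticSet G S'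

/-- `T` is a transversal of the hypergraph with edges `E j`. -/
def IsTransversal (E : Fin m → Set (Fin n)) (T : Set (Fin n)) : Prop :=
  ∀ j : Fin m, (T ∩ E j).Nonempty

/-- `T` is an inclusion-wise minimal transversal of the hypergraph with edges `E j`. -/
def IsMinimalTransversal (E : Fin m → Set (Fin n)) (T : Set (Fin n)) : Prop :=
  IsTransversal E T ∧ ∀ T' : Set (Fin n), T' ⊂ T → ¬ IsTransversal E T'

/-- The independent set `I = H ∪ {e*}` of the split graph `G`. -/
def Iset : Set (GVert n m) := Set.range (GVert.e : Fin m → GVert n m) ∪ {GVert.estar}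

/-- The clique `K = U ∪ V ∪ {u*}` of the split graph `G`. -/
def Kset : Set (GVert n m) :=
  Set.range (GVert.u : Fin m → GVert n m) ∪ Set.range (GVert.v : Fin n → GVert n m) ∪
    {GVert.ustar}


section Aux

variable {E : Fin m → Set (Fin n)}

lemma adj_def (a b : GVert n m) : (G E).Adj a b ↔ a ≠ b ∧ (baseRel E a b ∨ baseRel E b a) :=
  SimpleGraph.fromRel_adj _ _ _

lemma adj_ev {i : Fin n} {j : Fin m} (h : i ∉ E j) : (G E).Adj (GVert.e j) (GVert.v i) := by
  simp [adj_def, baseRel, h]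

lemma not_adj_ev {i : Fin n} {j : Fin m} (h : i ∈ E j) :
    ¬ (G E).Adj (GVert.e j) (GVert.v i) := by
  simp [adj_def, baseRel, h]

lemma mem_of_not_adj {i : Fin n} {j : Fin m} (h : ¬ (G E).Adj (GVert.v i) (GVert.e j)) :
    i ∈ E j := by
  by_contra hc; exact h (adj_ev hc).symm

lemma adj_vv {i k : Fin n} (h : i ≠ k) : (G E).Adj (GVert.v i) (GVert.v k) := by
  simp [adj_def, baseRel, h]

lemma adj_eu (j : Fin m) : (G E).Adj (GVert.e j) (GVert.u j) := by
  simp [adj_def, baseRel]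

lemma adj_uv (j : Fin m) (i : Fin n) : (G E).Adj (GVert.u j) (GVert.v i) := by
  simp [adj_def, baseRel]

lemma adj_ustar {x : GVert n m} (hx : x ≠ GVert.ustar) : (G E).Adj GVert.ustar x := by
  cases x <;> simp_all [adj_def, baseRel]

lemma nbhd_u {j : Fin m} {w : GVert n m} (h : (G E).Adj w (GVert.u j)) :
    (∃ i, w = GVert.v i) ∨ (∃ j', w = GVert.u j') ∨ w = GVert.ustar ∨ w = GVert.e j := by
  rw [adj_def] at h
  obtain ⟨hne, h | h⟩ := h <;> cases w <;> simp_all [baseRel]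

lemma nbhd_estar {w : GVert n m} (h : (G E).Adj w GVert.estar) :
    (∃ i, w = GVert.v i) ∨ w = GVert.ustar := by
  rw [adj_def] at h
  obtain ⟨hne, h | h⟩ := h <;> cases w <;> simp_all [baseRel]

lemma G_connected : (G E).Connected := by
  have hne : Nonempty (GVert n m) := ⟨GVert.ustar⟩
  have hreach : ∀ x : GVert n m, (G E).Reachable x GVert.ustar := by
    intro x
    by_cases hx : x = GVert.ustar
    · exact hx ▸ SimpleGraph.Reachable.refl _
    · exact (adj_ustar hx).symm.reachable
  exact ⟨fun x y => (hreach x).trans (hreach y).symm⟩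

lemma dist_le_two (x y : GVert n m) : (G E).dist x y ≤ 2 := by
  by_cases hxy : x = y
  · subst hxy; simp [SimpleGraph.dist_self]
  by_cases hadj : (G E).Adj x y
  · have := SimpleGraph.dist_eq_one_iff_adj.mpr hadj
    omega
  · have hx : x ≠ GVert.ustar := by
      rintro rfl; exact hadj (adj_ustar (Ne.symm hxy))
    have hy : y ≠ GVert.ustar := by
      rintro rfl; exact hadj (adj_ustar hx).symm
    have hle := SimpleGraph.dist_le
      (SimpleGraph.Walk.cons (G := G E) (adj_ustar hx).symm
        (SimpleGraph.Walk.cons (adj_ustar hy) SimpleGraph.Walk.nil))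
    simpa using hle

lemma support_cases {alpha : Type*} {Γ : SimpleGraph alpha} {x y : alpha} (p : Γ.Walk x y)
    (hl : p.length ≤ 2) {z : alpha} (hz : z ∈ p.support) :
    z = x ∨ z = y ∨ (Γ.Adj x z ∧ Γ.Adj z y ∧ p.length = 2) := by
  cases p with
  | nil => simp at hz; exact Or.inl hz
  | cons h q =>
    cases q with
    | nil =>
      simp [SimpleGraph.Walk.support_cons] at hz
      tauto
    | cons h' q' =>
      cases q' with
      | nil =>
        simp [SimpleGraph.Walk.support_cons] at hz
        rcases hz with rfl | rfl | rfl
        · exact Or.inl rfl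
        · exact Or.inr (Or.inr ⟨h, h', by simp⟩)
        · exact Or.inr (Or.inl rfl)
      | cons h'' q'' => simp [SimpleGraph.Walk.length_cons] at hl

lemma liesOn_iff_of {alpha : Type*} {Γ : SimpleGraph alpha} (hconn : Γ.Connected)
    (hd : ∀ x y, Γ.dist x y ≤ 2) (x y z : alpha) :
    LiesOnShortestPath Γ x y z ↔
      z = x ∨ z = y ∨ (¬ Γ.Adj x y ∧ x ≠ y ∧ Γ.Adj x z ∧ Γ.Adj z y) := by
  constructor
  · rintro ⟨p, hp, hlen, hz⟩
    have hl2 : p.length ≤ 2 := hlen ▸ hd x y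
    rcases support_cases p hl2 hz with h | h | ⟨h1, h2, hl⟩
    · exact Or.inl h
    · exact Or.inr (Or.inl h)
    · have hdist : Γ.dist x y = 2 := hlen ▸ hl ▸ rfl
      have hne : x ≠ y := by
        intro hxy; subst hxy; rw [SimpleGraph.dist_self] at hdist; omega
      have hnadj : ¬ Γ.Adj x y := by
        intro hadj
        rw [← SimpleGraph.dist_eq_one_iff_adj] at hadj; omega
      exact Or.inr (Or.inr ⟨hnadj, hne, h1, h2⟩)
  · rintro (rfl | rfl | ⟨hnadj, hne, h1, h2⟩)
    · obtain ⟨p, hp, hl⟩ := hconn.exists_path_of_dist z y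
      exact ⟨p, hp, hl, p.start_mem_support⟩
    · obtain ⟨p, hp, hl⟩ := hconn.exists_path_of_dist x z
      exact ⟨p, hp, hl, p.end_mem_support⟩
    · refine ⟨SimpleGraph.Walk.cons h1 (SimpleGraph.Walk.cons h2 SimpleGraph.Walk.nil),
        ?_, ?_, by simp⟩
      · simp [SimpleGraph.Walk.isPath_def]
        exact ⟨⟨h1.ne, hne⟩, h2.ne⟩
      · have h0 : Γ.dist x y ≠ 0 := by
          simpa [hconn.dist_eq_zero_iff] using hne
        have h1' : Γ.dist x y ≠ 1 := by
          simpa [SimpleGraph.dist_eq_one_iff_adj] using hnadj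
        have := hd x y
        simp only [SimpleGraph.Walk.length_cons, SimpleGraph.Walk.length_nil]
        omega

end Aux

/-- In the split graph `G` of the geodetic-set construction, if `S` is a minimal geodetic
set with `S ∩ U = ∅`, then `S ∩ K` is a subset of `V` and is a minimal transversal of `ℋ`. -/
theorem minimal_geodetic_gives_transversal
    (E : Fin m → Set (Fin n)) (hn : 1 ≤ n) (hm : 1 ≤ m)
    (hE : ∀ i : Fin n, ∃ j : Fin m, i ∉ E j)
    (S : Set (GVert n m)) (hS : IsMinimalGeodeticSet (G E) S)
    (hU : S ∩ Set.range (GVert.u : Fin m → GVert n m) = ∅) :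
    ∃ T : Set (Fin n), IsMinimalTransversal E T ∧
      S ∩ Kset = (GVert.v : Fin n → GVert n m) '' T := by
  classical
  have hconn : (G E).Connected := G_connected
  have hd : ∀ x y : GVert n m, (G E).dist x y ≤ 2 := dist_le_two
  have cov := liesOn_iff_of hconn hd
  have hUmem : ∀ j, GVert.u j ∉ S := fun j hj =>
    (Set.eq_empty_iff_forall_notMem.mp hU (GVert.u j)) ⟨hj, j, rfl⟩
  -- every e_j belongs to S, together with a transversal witness in V
  have hF2 : ∀ j : Fin m, GVert.e j ∈ S ∧ ∃ i, i ∈ E j ∧ GVert.v i ∈ S := by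
    intro j
    obtain ⟨x, hx, y, hy, hcov⟩ := hS.1 (GVert.u j)
    rw [cov] at hcov
    rcases hcov with h | h | ⟨hnadj, hne, h1, h2⟩
    · subst h; exact absurd hx (hUmem j)
    · subst h; exact absurd hy (hUmem j)
    · rcases nbhd_u h1 with ⟨i, rfl⟩ | ⟨j', rfl⟩ | rfl | rfl
      · rcases nbhd_u h2.symm with ⟨k, rfl⟩ | ⟨j', rfl⟩ | rfl | rfl
        · exact absurd (adj_vv (fun hik => hne (by rw [hik]))) hnadj
        · exact absurd hy (hUmem j')
        · exact absurd (adj_ustar hne).symm hnadj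
        · exact ⟨hy, i, mem_of_not_adj hnadj, hx⟩
      · exact absurd hx (hUmem j')
      · exact absurd (adj_ustar (Ne.symm hne)) hnadj
      · rcases nbhd_u h2.symm with ⟨k, rfl⟩ | ⟨j', rfl⟩ | rfl | rfl
        · exact ⟨hx, k, mem_of_not_adj (fun h => hnadj h.symm), hy⟩
        · exact absurd hy (hUmem j')
        · exact absurd (adj_ustar hne).symm hnadj
        · exact absurd rfl hne
  -- e* belongs to S
  have hestarS : GVert.estar ∈ S := by
    obtain ⟨x, hx, y, hy, hcov⟩ := hS.1 GVert.estar
    rw [cov] at hcov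
    rcases hcov with h | h | ⟨hnadj, hne, h1, h2⟩
    · subst h; exact hx
    · subst h; exact hy
    · exfalso
      rcases nbhd_estar h1 with ⟨i, rfl⟩ | rfl
      · rcases nbhd_estar h2.symm with ⟨k, rfl⟩ | rfl
        · exact hnadj (adj_vv (fun hik => hne (by rw [hik])))
        · exact hnadj (adj_ustar hne).symm
      · exact hnadj (adj_ustar (Ne.symm hne))
  -- u* does not belong to S
  have hustarS : GVert.ustar ∉ S := by
    intro hmem
    obtain ⟨hej0, i0, hi0, hvi0⟩ := hF2 ⟨0, hm⟩
    refine hS.2 (S \ {GVert.ustar}) ⟨Set.diff_subset, fun hsup => (hsup hmem).2 rfl⟩ ?_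
    intro z
    by_cases hz : z = GVert.ustar
    · subst hz
      refine ⟨GVert.e ⟨0, hm⟩, ⟨hej0, by simp⟩, GVert.v i0, ⟨hvi0, by simp⟩,
        (cov _ _ _).mpr (Or.inr (Or.inr ⟨not_adj_ev hi0, by simp,
          (adj_ustar (by simp)).symm, adj_ustar (by simp)⟩))⟩
    · obtain ⟨x, hx, y, hy, hcov⟩ := hS.1 z
      rw [cov] at hcov
      rcases hcov with h | h | ⟨hnadj, hne, h1, h2⟩
      · subst h; exact ⟨z, ⟨hx, hz⟩, z, ⟨hx, hz⟩, (cov _ _ _).mpr (Or.inl rfl)⟩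
      · subst h; exact ⟨z, ⟨hy, hz⟩, z, ⟨hy, hz⟩, (cov _ _ _).mpr (Or.inl rfl)⟩
      · have hxu : x ≠ GVert.ustar := by
          rintro rfl; exact hnadj (adj_ustar (Ne.symm hne))
        have hyu : y ≠ GVert.ustar := by
          rintro rfl; exact hnadj (adj_ustar hne).symm
        exact ⟨x, ⟨hx, hxu⟩, y, ⟨hy, hyu⟩,
          (cov _ _ _).mpr (Or.inr (Or.inr ⟨hnadj, hne, h1, h2⟩))⟩
  refine ⟨{i | GVert.v i ∈ S}, ⟨?_, ?_⟩, ?_⟩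
  · -- T is a transversal
    intro j
    obtain ⟨_, i, hiE, hvi⟩ := hF2 j
    exact ⟨i, hvi, hiE⟩
  · -- T is a minimal transversal
    intro T' hT' htrans
    obtain ⟨i1, hi1T, hi1T'⟩ := Set.exists_of_ssubset hT'
    have hsub : (S ∩ Iset) ∪ (GVert.v '' T') ⊆ S := by
      rintro w (⟨hw, _⟩ | ⟨i, hiT', rfl⟩)
      · exact hw
      · exact hT'.1 hiT'
    have hssub : (S ∩ Iset) ∪ (GVert.v '' T') ⊂ S := by
      refine ⟨hsub, fun hsup => ?_⟩
      rcases hsup hi1T with ⟨_, hI⟩ | ⟨k, hk, hvk⟩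
      · simp [Iset] at hI
      · injection hvk with h; exact hi1T' (h ▸ hk)
    refine hS.2 _ hssub ?_
    intro z
    cases z with
    | v i =>
      by_cases hiT' : i ∈ T'
      · exact ⟨GVert.v i, Or.inr ⟨i, hiT', rfl⟩, GVert.v i, Or.inr ⟨i, hiT', rfl⟩,
          (cov _ _ _).mpr (Or.inl rfl)⟩
      · obtain ⟨j, hij⟩ := hE i
        obtain ⟨k, hkT', hkE⟩ := htrans j
        have hki : k ≠ i := fun h => hij (h ▸ hkE)
        exact ⟨GVert.e j, Or.inl ⟨(hF2 j).1, Or.inl ⟨j, rfl⟩⟩,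
          GVert.v k, Or.inr ⟨k, hkT', rfl⟩,
          (cov _ _ _).mpr (Or.inr (Or.inr ⟨not_adj_ev hkE, by simp,
            adj_ev hij, adj_vv (Ne.symm hki)⟩))⟩
    | e j =>
      exact ⟨GVert.e j, Or.inl ⟨(hF2 j).1, Or.inl ⟨j, rfl⟩⟩,
        GVert.e j, Or.inl ⟨(hF2 j).1, Or.inl ⟨j, rfl⟩⟩, (cov _ _ _).mpr (Or.inl rfl)⟩
    | u j =>
      obtain ⟨k, hkT', hkE⟩ := htrans j
      exact ⟨GVert.e j, Or.inl ⟨(hF2 j).1, Or.inl ⟨j, rfl⟩⟩,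
        GVert.v k, Or.inr ⟨k, hkT', rfl⟩,
        (cov _ _ _).mpr (Or.inr (Or.inr ⟨not_adj_ev hkE, by simp,
          adj_eu j, adj_uv j k⟩))⟩
    | estar =>
      exact ⟨GVert.estar, Or.inl ⟨hestarS, Or.inr rfl⟩,
        GVert.estar, Or.inl ⟨hestarS, Or.inr rfl⟩, (cov _ _ _).mpr (Or.inl rfl)⟩
    | ustar =>
      obtain ⟨k, hkT', hkE⟩ := htrans ⟨0, hm⟩
      exact ⟨GVert.e ⟨0, hm⟩, Or.inl ⟨(hF2 ⟨0, hm⟩).1, Or.inl ⟨⟨0, hm⟩, rfl⟩⟩,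
        GVert.v k, Or.inr ⟨k, hkT', rfl⟩,
        (cov _ _ _).mpr (Or.inr (Or.inr ⟨not_adj_ev hkE, by simp,
          (adj_ustar (by simp)).symm, adj_ustar (by simp)⟩))⟩
  · -- S ∩ K = v '' T
    ext w
    simp only [Kset, Set.mem_inter_iff, Set.mem_union, Set.mem_range,
      Set.mem_singleton_iff, Set.mem_image, Set.mem_setOf_eq]
    constructor
    · rintro ⟨hwS, (⟨j, rfl⟩ | ⟨i, rfl⟩) | rfl⟩
      · exact absurd hwS (hUmem j)
      · exact ⟨i, hwS, rfl⟩
      · exact absurd hwS hustarS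
    · rintro ⟨i, hi, rfl⟩
      exact ⟨hi, Or.inl (Or.inr ⟨i, rfl⟩)⟩

end GeoConstr
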